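/- arXiv:2510.16214 — 4 statements merged into one kernel-verified Lean document; each statement's English description precedes it below -/
import Mathlib

section
/- Fix K : ℕ and for each i : Fin K a finite type ι i. For each i let W̃ i : Matrix ((ι i) × (ι i)) ((ι i) × (ι i)) ℂ satisfy 0 ≤ W̃ i ≤ 1, and let ψ i : (ι i) × (ι i) → ℂ be a unit vector with ⟨ψ i, W̃ i ψ i⟩ = 1. Define the global state Ψ : ((∀ j, ι j) × (∀ j, ι j)) → ℂ by Ψ (u, v) = ∏ j, ψ j (u j, v j), and the embedded acceptance operator W i acting on the global index type by W i ((u,v),(u',v')) = (W̃ i) ((u i, v i), (u' i, v' i)) · ∏_{j ≠ i} (if u j = u' j ∧ v j = v' j then 1 else 0) (i.e., W̃ i tensored with the identity on all other factors). Then for every i, W i *ᵥ Ψ = Ψ; in particular Ψ lies in the intersection over all i of the +1 eigenspaces (ranges) of the W i, so the common winning sector is nonempty. -/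
open Matrix
open scoped ComplexOrder

/-- The tensor product of per-game perfect-strategy states is fixed by every
embedded acceptance operator; hence the common winning sector is nonempty. -/
theorem common_winning_sector_nonempty
    (K : ℕ) (ι : Fin K → Type)
    [∀ i, Fintype (ι i)] [∀ i, DecidableEq (ι i)]
    (Wt : ∀ i, Matrix ((ι i) × (ι i)) ((ι i) × (ι i)) ℂ)
    (hW0 : ∀ i, (Wt i).PosSemidef) (hW1 : ∀ i, (1 - Wt i).PosSemidef)
    (ψ : ∀ i, (ι i × ι i) → ℂ)
    (hunit : ∀ i, star (ψ i) ⬝ᵥ ψ i = 1)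
    (hperf : ∀ i, star (ψ i) ⬝ᵥ ((Wt i) *ᵥ ψ i) = 1)
    (Ψ : ((∀ j, ι j) × (∀ j, ι j)) → ℂ)
    (hΨ : ∀ u v, Ψ (u, v) = ∏ j, ψ j (u j, v j))
    (W : ∀ _ : Fin K,
        Matrix (((∀ j, ι j) × (∀ j, ι j))) (((∀ j, ι j) × (∀ j, ι j))) ℂ)
    (hW : ∀ i u v u' v',
        W i (u, v) (u', v')
          = (Wt i) (u i, v i) (u' i, v' i) *
              ∏ j ∈ Finset.univ.erase i,
                (if u j = u' j ∧ v j = v' j then (1 : ℂ) else 0)) :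
    (∀ i, W i *ᵥ Ψ = Ψ) ∧ (∀ i, Ψ ∈ Set.range (W i).mulVec) := by
  -- Step 1: each ψ i is a fixed point of Wt i.
  have hfix : ∀ i, Wt i *ᵥ ψ i = ψ i := by
    intro i
    have h0 : star (ψ i) ⬝ᵥ ((1 - Wt i) *ᵥ ψ i) = 0 := by
      rw [sub_mulVec, dotProduct_sub, one_mulVec, hunit, hperf, sub_self]
    have := ((hW1 i).dotProduct_mulVec_zero_iff (ψ i)).mp h0
    rw [sub_mulVec, one_mulVec, sub_eq_zero] at this
    exact this.symm
  have main : ∀ i, W i *ᵥ Ψ = Ψ := by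
    intro i
    funext x
    obtain ⟨u, v⟩ := x
    classical
    -- the embedding of local pairs into global pairs
    set e : ι i × ι i → ((∀ j, ι j) × (∀ j, ι j)) :=
      fun p => (Function.update u i p.1, Function.update v i p.2) with he
    have hinj : Function.Injective e := by
      intro p q h
      have h1 := congrFun (congrArg Prod.fst h) i
      have h2 := congrFun (congrArg Prod.snd h) i
      simp only [he, Function.update_self] at h1 h2
      exact Prod.ext h1 h2
    have hvanish : ∀ y : ((∀ j, ι j) × (∀ j, ι j)),
        y ∉ Finset.univ.image e → W i (u, v) y * Ψ y = 0 := by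
      intro y hy
      obtain ⟨u', v'⟩ := y
      have : ¬ (∀ j, j ≠ i → u j = u' j ∧ v j = v' j) := by
        intro hall
        apply hy
        refine Finset.mem_image.mpr ⟨(u' i, v' i), Finset.mem_univ _, ?_⟩
        simp only [he, Prod.mk.injEq]
        constructor <;> funext j <;> by_cases hj : j = i
        · subst hj; simp
        · rw [Function.update_of_ne hj]; exact (hall j hj).1
        · subst hj; simp
        · rw [Function.update_of_ne hj]; exact (hall j hj).2
      push_neg at this
      obtain ⟨j, hj, hne⟩ := this
      have : (∏ k ∈ Finset.univ.erase i,
          (if u k = u' k ∧ v k = v' k then (1 : ℂ) else 0)) = 0 := by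
        apply Finset.prod_eq_zero (Finset.mem_erase.mpr ⟨hj, Finset.mem_univ j⟩)
        rw [if_neg]
        intro ⟨h1, h2⟩
        exact hne h1 h2
      rw [hW, this, mul_zero, zero_mul]
    have hsum : (W i *ᵥ Ψ) (u, v) = ∑ p : ι i × ι i, W i (u, v) (e p) * Ψ (e p) := by
      rw [mulVec, dotProduct]
      rw [← Finset.sum_subset (Finset.subset_univ (Finset.univ.image e))
        (fun y _ hy => hvanish y hy)]
      rw [Finset.sum_image (fun a _ b _ h => hinj h)]
    rw [hsum]
    have hterm : ∀ p : ι i × ι i,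
        W i (u, v) (e p) * Ψ (e p)
          = Wt i (u i, v i) p * (ψ i p * ∏ j ∈ Finset.univ.erase i, ψ j (u j, v j)) := by
      intro ⟨a, b⟩
      have hind : (∏ j ∈ Finset.univ.erase i,
          (if u j = Function.update u i a j ∧ v j = Function.update v i b j
            then (1 : ℂ) else 0)) = 1 := by
        apply Finset.prod_eq_one
        intro j hj
        have hj' := (Finset.mem_erase.mp hj).1
        rw [Function.update_of_ne hj', Function.update_of_ne hj', if_pos ⟨rfl, rfl⟩]
      have hΨe : Ψ (e (a, b)) = ψ i (a, b) * ∏ j ∈ Finset.univ.erase i, ψ j (u j, v j) := by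
        rw [he, hΨ, ← Finset.mul_prod_erase _ _ (Finset.mem_univ i)]
        simp only [Function.update_self]
        congr 1
        apply Finset.prod_congr rfl
        intro j hj
        have hj' := (Finset.mem_erase.mp hj).1
        rw [Function.update_of_ne hj', Function.update_of_ne hj']
      rw [he, hW, hind, mul_one]
      simp only [Function.update_self]
      simp only [he] at hΨe
      rw [hΨe]
    simp_rw [hterm, ← mul_assoc]
    rw [← Finset.sum_mul]
    have hfx : (∑ p : ι i × ι i, Wt i (u i, v i) p * ψ i p) = ψ i (u i, v i) := by
      have := congrFun (hfix i) (u i, v i)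
      rwa [mulVec, dotProduct] at this
    rw [hfx, hΨ, ← Finset.mul_prod_erase _ _ (Finset.mem_univ i)]
  exact ⟨main, fun i => ⟨Ψ, main i⟩⟩
end

section
/- Fix K : ℕ and a finite type ι (the common local register). For each i : Fin K let α i, β i be finite answer types, S i ⊆ (α i) × (β i) accepted sets, and let M i : α i → Matrix ι ι ℂ and N i : β i → Matrix ι ι ℂ be families of positive semidefinite matrices with ∑_a M i a = 1 and ∑_b N i b = 1, such that measurement operators of distinct games commute within each player: for i ≠ j, (M i a) * (M j a') = (M j a') * (M i a) for all a, a', and likewise (N i b) * (N j b') = (N j b') * (N i b). Suppose Ψ : ι × ι → ℂ is a unit vector achieving every game perfectly: for each i, ∑_{(a,b) ∈ S i} ⟨Ψ, (M i a ⊗ N i b) Ψ⟩ = 1. Then the joint product strategy wins all K games simultaneously with probability 1: ∑ over all tuples (a⃗, b⃗) with (a⃗ i, b⃗ i) ∈ S i for every i of ⟨Ψ, ((∏_i M i (a⃗ i)) ⊗ (∏_i N i (b⃗ i))) Ψ⟩ = 1, where the products over i are taken in the order of Fin K (well defined across games by the commutation hypothesis). -/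
/-!
Write `P i (a, b) := M i a ⊗ N i b`; for each game this is again a POVM. A POVM element that
`Ψ` never triggers kills `Ψ` (positivity), so perfection of game `i` means that
`Pᵢ := ∑_{(a, b) ∈ S i} P i (a, b)` fixes `Ψ`. Expanding the ordered product `P₀ ⋯ P_{K-1}`
gives exactly the operator of the joint strategy summed over all winning tuples, and this
product fixes `Ψ` because each factor does; hence the winning probability is `⟨Ψ, Ψ⟩ = 1`.
-/

open Matrix
open scoped Kronecker ComplexOrder

theorem List.prod_ofFn_sum {R : Type*} [NonAssocSemiring R] :
    ∀ {n : ℕ} {γ : Fin n → Type*} [∀ i, DecidableEq (γ i)]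
      (t : ∀ i, Finset (γ i)) (f : ∀ i, γ i → R),
      (List.ofFn fun i => ∑ x ∈ t i, f i x).prod =
        ∑ x ∈ Fintype.piFinset t, (List.ofFn fun i => f i (x i)).prod
  | 0, _, _, _, _ => by simp
  | _ + 1, γ, _, t, f => by
    have hpi : Fintype.piFinset t =
        (t 0 ×ˢ Fintype.piFinset (Fin.tail t)).map (Fin.consEquiv γ).toEmbedding := by
      simpa using Finset.filter_piFinset_eq_map_consEquiv t fun _ => True
    rw [List.ofFn_succ, List.prod_cons, List.prod_ofFn_sum (fun i => t i.succ) (fun i => f i.succ),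
      Finset.sum_mul_sum, ← Finset.sum_product', hpi, Finset.sum_map]
    simp only [Fin.consEquiv, Function.Embedding.coeFn_mk, Equiv.coe_fn_mk, List.ofFn_succ,
      Fin.cons_zero, Fin.cons_succ, List.prod_cons]
    rfl

theorem Finset.sum_filter_forall_mem_eq_sum_piFinset {ι M : Type*} [AddCommMonoid M]
    [Fintype ι] [DecidableEq ι] {α β : ι → Type*} [∀ i, Fintype (α i)] [∀ i, Fintype (β i)]
    (S : ∀ i, Finset (α i × β i))
    [DecidablePred fun ab : (∀ i, α i) × (∀ i, β i) => ∀ i, (ab.1 i, ab.2 i) ∈ S i]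
    (f : (∀ i, α i) × (∀ i, β i) → M) :
    ∑ ab ∈ Finset.univ.filter (fun ab : (∀ i, α i) × (∀ i, β i) => ∀ i, (ab.1 i, ab.2 i) ∈ S i),
        f ab =
      ∑ x ∈ Fintype.piFinset S, f (Equiv.arrowProdEquivProdArrow ι α β x) :=
  Finset.sum_equiv (Equiv.arrowProdEquivProdArrow ι α β).symm (by simp) (fun _ _ => rfl)

namespace Matrix

variable {R l m n p γ δ : Type*}

theorem sum_kronecker [CommSemiring R] (s : Finset γ) (f : γ → Matrix l m R)
    (B : Matrix n p R) : (∑ x ∈ s, f x) ⊗ₖ B = ∑ x ∈ s, f x ⊗ₖ B :=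
  map_sum ((kroneckerBilinear (R := R) (α := R)).flip B) f s

theorem kronecker_sum [CommSemiring R] (A : Matrix l m R) (s : Finset γ)
    (f : γ → Matrix n p R) : A ⊗ₖ (∑ x ∈ s, f x) = ∑ x ∈ s, A ⊗ₖ f x :=
  map_sum (kroneckerBilinear (R := R) (α := R) A) f s

theorem sum_kronecker_sum [CommSemiring R] [Fintype γ] [Fintype δ] (f : γ → Matrix l m R)
    (g : δ → Matrix n p R) :
    ∑ ab : γ × δ, f ab.1 ⊗ₖ g ab.2 = (∑ a, f a) ⊗ₖ ∑ b, g b := by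
  simp_rw [Fintype.sum_prod_type, sum_kronecker, kronecker_sum]

theorem prod_ofFn_kronecker_prod_ofFn [CommSemiring R] [Fintype m] [DecidableEq m]
    [Fintype n] [DecidableEq n] :
    ∀ {k : ℕ} (f : Fin k → Matrix m m R) (g : Fin k → Matrix n n R),
      (List.ofFn f).prod ⊗ₖ (List.ofFn g).prod = (List.ofFn fun i => f i ⊗ₖ g i).prod
  | 0, _, _ => by simp
  | _ + 1, f, g => by
    simp only [List.ofFn_succ, List.prod_cons, mul_kronecker_mul,
      prod_ofFn_kronecker_prod_ofFn (fun i => f i.succ) (fun i => g i.succ)]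

theorem list_prod_mulVec_eq_self [Fintype n] [DecidableEq n] [CommSemiring R]
    {l : List (Matrix n n R)} {v : n → R} (h : ∀ A ∈ l, A *ᵥ v = v) : l.prod *ᵥ v = v :=
  List.prod_induction (fun A => A *ᵥ v = v)
    (fun A B hA hB => by rw [← mulVec_mulVec, hB, hA]) (one_mulVec v) h

theorem sum_mulVec_eq_self_of_povm {𝕜 : Type*} [RCLike 𝕜] [Fintype n] [DecidableEq n]
    [Fintype γ] {P : γ → Matrix n n 𝕜} (hP : ∀ x, (P x).PosSemidef) (hsum : ∑ x, P x = 1)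
    (s : Finset γ) {v : n → 𝕜} (hv : ∑ x ∈ s, star v ⬝ᵥ (P x *ᵥ v) = star v ⬝ᵥ v) :
    (∑ x ∈ s, P x) *ᵥ v = v := by
  classical
  have htotal : ∑ x, star v ⬝ᵥ (P x *ᵥ v) = star v ⬝ᵥ v := by
    rw [← dotProduct_sum, ← sum_mulVec, hsum, one_mulVec]
  have hcompl : ∑ x ∈ sᶜ, star v ⬝ᵥ (P x *ᵥ v) = 0 := by
    have := Finset.sum_compl_add_sum s fun x => star v ⬝ᵥ (P x *ᵥ v)
    rw [htotal, hv] at this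
    exact add_eq_right.mp this
  have hkill : ∀ x ∉ s, P x *ᵥ v = 0 := fun x hx =>
    ((hP x).dotProduct_mulVec_zero_iff v).mp <|
      (Finset.sum_eq_zero_iff_of_nonneg fun y _ => (hP y).dotProduct_mulVec_nonneg v).mp
        hcompl x (Finset.mem_compl.mpr hx)
  calc (∑ x ∈ s, P x) *ᵥ v = ∑ x, P x *ᵥ v :=
        (sum_mulVec _ _ _).trans
          (Finset.sum_subset s.subset_univ fun x _ hx => hkill x hx)
    _ = v := by rw [← sum_mulVec, hsum, one_mulVec]

end Matrix

theorem compressed_parallel_games_perfect_general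
    (K : ℕ) (ι : Type) [Fintype ι] [DecidableEq ι]
    (α β : Fin K → Type)
    [∀ i, Fintype (α i)] [∀ i, DecidableEq (α i)]
    [∀ i, Fintype (β i)] [∀ i, DecidableEq (β i)]
    (S : ∀ i, Finset (α i × β i))
    (M : ∀ i, α i → Matrix ι ι ℂ)
    (N : ∀ i, β i → Matrix ι ι ℂ)
    (hMpos : ∀ i a, (M i a).PosSemidef)
    (hNpos : ∀ i b, (N i b).PosSemidef)
    (hMsum : ∀ i, ∑ a, M i a = 1)
    (hNsum : ∀ i, ∑ b, N i b = 1)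
    (Ψ : ι × ι → ℂ)
    (hunit : star Ψ ⬝ᵥ Ψ = 1)
    (hperf : ∀ i, ∑ ab ∈ S i,
        star Ψ ⬝ᵥ (((M i ab.1) ⊗ₖ (N i ab.2)) *ᵥ Ψ) = 1) :
    ∑ ab ∈ Finset.univ.filter
        (fun ab : (∀ i, α i) × (∀ i, β i) => ∀ i, (ab.1 i, ab.2 i) ∈ S i),
      star Ψ ⬝ᵥ
        (((List.ofFn fun i => M i (ab.1 i)).prod ⊗ₖ
            (List.ofFn fun i => N i (ab.2 i)).prod) *ᵥ Ψ) = 1 := by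
  let P : ∀ i, α i × β i → Matrix (ι × ι) (ι × ι) ℂ := fun i ab => M i ab.1 ⊗ₖ N i ab.2
  have hpsd (i : Fin K) (ab : α i × β i) : (P i ab).PosSemidef :=
    (hMpos i ab.1).kronecker (hNpos i ab.2)
  have hfix (i : Fin K) : (∑ ab ∈ S i, P i ab) *ᵥ Ψ = Ψ :=
    sum_mulVec_eq_self_of_povm (hpsd i)
      (by rw [sum_kronecker_sum, hMsum, hNsum, one_kronecker_one]) (S i)
      (by rw [hperf, hunit])
  calc _ = ∑ x ∈ Fintype.piFinset S, star Ψ ⬝ᵥ ((List.ofFn fun i => P i (x i)).prod *ᵥ Ψ) := by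
        rw [Finset.sum_filter_forall_mem_eq_sum_piFinset]
        simp only [prod_ofFn_kronecker_prod_ofFn]
        rfl
    _ = star Ψ ⬝ᵥ ((List.ofFn fun i => ∑ ab ∈ S i, P i ab).prod *ᵥ Ψ) := by
        rw [List.prod_ofFn_sum, sum_mulVec, dotProduct_sum]
    _ = 1 := by
        rw [list_prod_mulVec_eq_self (by simpa [List.mem_ofFn] using hfix), hunit]

/-- Commuting embeddings on a common register: the joint product strategy wins
all `K` games simultaneously with probability 1. -/
theorem compressed_parallel_games_perfect
    (K : ℕ) (ι : Type) [Fintype ι] [DecidableEq ι]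
    (α β : Fin K → Type)
    [∀ i, Fintype (α i)] [∀ i, DecidableEq (α i)]
    [∀ i, Fintype (β i)] [∀ i, DecidableEq (β i)]
    (S : ∀ i, Finset (α i × β i))
    (M : ∀ i, α i → Matrix ι ι ℂ)
    (N : ∀ i, β i → Matrix ι ι ℂ)
    (hMpos : ∀ i a, (M i a).PosSemidef)
    (hNpos : ∀ i b, (N i b).PosSemidef)
    (hMsum : ∀ i, ∑ a, M i a = 1)
    (hNsum : ∀ i, ∑ b, N i b = 1)
    (hMcomm : ∀ i j, i ≠ j → ∀ a a', M i a * M j a' = M j a' * M i a)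
    (hNcomm : ∀ i j, i ≠ j → ∀ b b', N i b * N j b' = N j b' * N i b)
    (Ψ : ι × ι → ℂ)
    (hunit : star Ψ ⬝ᵥ Ψ = 1)
    (hperf : ∀ i, ∑ ab ∈ S i,
        star Ψ ⬝ᵥ (((M i ab.1) ⊗ₖ (N i ab.2)) *ᵥ Ψ) = 1) :
    ∑ ab ∈ Finset.univ.filter
        (fun ab : (∀ i, α i) × (∀ i, β i) => ∀ i, (ab.1 i, ab.2 i) ∈ S i),
      star Ψ ⬝ᵥ
        (((List.ofFn fun i => M i (ab.1 i)).prod ⊗ₖ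
            (List.ofFn fun i => N i (ab.2 i)).prod) *ᵥ Ψ) = 1 :=
  compressed_parallel_games_perfect_general K ι α β S M N hMpos hNpos hMsum hNsum Ψ hunit hperf
end

section
/- Let K : ℕ with K ≥ 2 and n : Fin K → ℕ with n i ≥ 2 for every i (each game needs more than one qubit). Let N := ∑_{i : Fin K} n i, and let r : ℕ satisfy r ≤ ∑_{i : Fin K} (2^(n i) − 1). Let m be the least natural number such that r ≤ 2^m − 1. Then m < N. (Qubit reduction: the compressed register size is strictly smaller than the additive tensor-product baseline.) -/
lemma two_pow_add_le (a t : ℕ) (ha : 2 ≤ a) (ht : 2 ≤ t) :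
    2 ^ a + 2 ^ t ≤ 2 ^ (a + t - 1) := by
  have h1 : 2 ^ a ≤ 2 ^ (a + t - 2) := Nat.pow_le_pow_right (by norm_num) (by omega)
  have h2 : 2 ^ t ≤ 2 ^ (a + t - 2) := Nat.pow_le_pow_right (by norm_num) (by omega)
  have h3 : 2 ^ (a + t - 1) = 2 ^ (a + t - 2) + 2 ^ (a + t - 2) := by
    have : a + t - 1 = (a + t - 2) + 1 := by omega
    rw [this, pow_succ]; ring
  omega

lemma sum_pow_sub_one_le {ι : Type*} (s : Finset ι) (n : ι → ℕ)
    (h : ∀ i ∈ s, 2 ≤ n i) :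
    ∑ i ∈ s, (2 ^ n i - 1) ≤ 2 ^ (∑ i ∈ s, n i + 1 - s.card) - 1 := by
  induction s using Finset.cons_induction with
  | empty => simp
  | cons a s ha ih =>
    have hna : 2 ≤ n a := h a (Finset.mem_cons_self a s)
    have ih' := ih (fun i hi => h i (Finset.mem_cons_of_mem hi))
    have hcard : s.card ≤ ∑ i ∈ s, n i := by
      calc s.card = ∑ _i ∈ s, 1 := by simp
        _ ≤ ∑ i ∈ s, n i := Finset.sum_le_sum (fun i hi => by have := h i (Finset.mem_cons_of_mem hi); omega)
    have hcard2 : 2 * s.card ≤ ∑ i ∈ s, n i := by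
      calc 2 * s.card = ∑ _i ∈ s, 2 := by simp [mul_comm]
        _ ≤ ∑ i ∈ s, n i := Finset.sum_le_sum (fun i hi => h i (Finset.mem_cons_of_mem hi))
    rw [Finset.sum_cons, Finset.sum_cons, Finset.card_cons]
    rcases s.eq_empty_or_nonempty with rfl | hne
    · simp
    · have hc1 : 1 ≤ s.card := Finset.card_pos.mpr hne
      set S := ∑ i ∈ s, n i with hS
      set c := s.card with hc
      set t := S + 1 - c with htdef
      have ht : 2 ≤ t := by omega
      have hkey := two_pow_add_le (n a) t hna ht
      have hexp : n a + S + 1 - (c + 1) = n a + t - 1 := by omega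
      have hpos : 1 ≤ 2 ^ n a := Nat.one_le_two_pow
      have hpos2 : 1 ≤ 2 ^ t := Nat.one_le_two_pow
      rw [hexp]
      omega

/-- Qubit reduction: the compressed register size `m = min {m | 2^m - 1 ≥ r}`
is strictly smaller than the additive tensor-product baseline `N = ∑ n i`. -/
theorem qubit_reduction (K : ℕ) (hK : 2 ≤ K) (n : Fin K → ℕ)
    (hn : ∀ i, 2 ≤ n i)
    (N : ℕ) (hN : N = ∑ i : Fin K, n i)
    (r : ℕ) (hr : r ≤ ∑ i : Fin K, (2 ^ (n i) - 1))
    (m : ℕ) (hm : IsLeast {m : ℕ | r ≤ 2 ^ m - 1} m) :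
    m < N := by
  have haux := sum_pow_sub_one_le Finset.univ n (fun i _ => hn i)
  simp only [Finset.card_univ, Fintype.card_fin] at haux
  have hNK : 2 * K ≤ N := by
    rw [hN]
    calc 2 * K = ∑ _i : Fin K, 2 := by simp [mul_comm]
      _ ≤ ∑ i : Fin K, n i := Finset.sum_le_sum (fun i _ => hn i)
  have h1 : r ≤ 2 ^ (N + 1 - K) - 1 := by
    rw [hN]; exact le_trans hr haux
  have h2 : 2 ^ (N + 1 - K) - 1 ≤ 2 ^ (N - 1) - 1 := by
    have := Nat.pow_le_pow_right (show 1 ≤ 2 by norm_num) (show N + 1 - K ≤ N - 1 by omega)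
    omega
  have hmem : N - 1 ∈ {m : ℕ | r ≤ 2 ^ m - 1} := le_trans h1 h2
  have := hm.2 hmem
  omega
end

section
/- Let d : ℕ and let 𝔥 be a set of d × d complex matrices whose elements pairwise commute. For each i in a (finite) index type, let A i be a star subalgebra of Matrix (Fin (D i)) (Fin (D i)) ℂ, let φ i : A i →⋆ₐ[ℂ] Matrix (Fin d) (Fin d) ℂ be a star algebra homomorphism, and let k i be a unitary d × d matrix, such that for every self-adjoint a ∈ A i, the conjugated image k i * (φ i a) * (k i)ᴴ lies in the ℝ-linear span of 𝔥. Define φ̂ i (x) := k i * (φ i x) * (k i)ᴴ. Then each φ̂ i is a star algebra homomorphism, φ̂ i is injective whenever φ i is, and the ranges commute elementwise across games: for all i, j and all x ∈ A i, y ∈ A j, (φ̂ i x) * (φ̂ j y) = (φ̂ j y) * (φ̂ i x). (Aligning the game algebras into a common abelian Cartan sector via local unitary conjugations yields commuting embeddings.) -/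
open Matrix

lemma span_commute {n : Type*} [Fintype n] [DecidableEq n]
    (𝔥 : Set (Matrix n n ℂ))
    (h𝔥 : ∀ X ∈ 𝔥, ∀ Y ∈ 𝔥, X * Y = Y * X) :
    ∀ X ∈ Submodule.span ℝ 𝔥, ∀ Y ∈ Submodule.span ℝ 𝔥, Commute X Y := by
  intro X hX
  induction hX using Submodule.span_induction with
  | mem x hx =>
    intro Y hY
    induction hY using Submodule.span_induction with
    | mem y hy => exact h𝔥 x hx y hy
    | zero => exact Commute.zero_right _
    | add a b _ _ ha hb => exact ha.add_right hb
    | smul c a _ ha => exact ha.smul_right c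
  | zero => intro Y _; exact Commute.zero_left _
  | add a b _ _ ha hb => intro Y hY; exact (ha Y hY).add_left (hb Y hY)
  | smul c a _ ha => intro Y hY; exact (ha Y hY).smul_left c

set_option maxHeartbeats 1000000 in
/-- Aligning the game algebras into a common abelian Cartan sector via local
unitary conjugations yields commuting embeddings. -/
theorem cartan_alignment_yields_commuting_embeddings
    (d : ℕ) (𝔥 : Set (Matrix (Fin d) (Fin d) ℂ))
    (h𝔥 : ∀ X ∈ 𝔥, ∀ Y ∈ 𝔥, X * Y = Y * X)
    (I : Type) [Fintype I]
    (D : I → ℕ)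
    (A : ∀ i, StarSubalgebra ℂ (Matrix (Fin (D i)) (Fin (D i)) ℂ))
    (φ : ∀ i, (A i) →⋆ₐ[ℂ] Matrix (Fin d) (Fin d) ℂ)
    (k : I → Matrix (Fin d) (Fin d) ℂ)
    (hk : ∀ i, k i * (k i)ᴴ = 1 ∧ (k i)ᴴ * k i = 1)
    (halign : ∀ i (a : A i), IsSelfAdjoint (a : Matrix (Fin (D i)) (Fin (D i)) ℂ) →
        k i * (φ i a) * (k i)ᴴ ∈ Submodule.span ℝ 𝔥) :
    ∃ φhat : ∀ i, (A i) →⋆ₐ[ℂ] Matrix (Fin d) (Fin d) ℂ,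
      (∀ i (x : A i), φhat i x = k i * (φ i x) * (k i)ᴴ) ∧
      (∀ i, Function.Injective (φ i) → Function.Injective (φhat i)) ∧
      (∀ i j (x : A i) (y : A j),
        (φhat i x) * (φhat j y) = (φhat j y) * (φhat i x)) := by
  refine ⟨fun i =>
    { toFun := fun x => k i * (φ i x) * (k i)ᴴ
      map_one' := by simp [(hk i).1]
      map_mul' := fun x y => by
        have h := (hk i).2
        simp only [_root_.map_mul]
        calc k i * (φ i x * φ i y) * (k i)ᴴ
            = (k i * φ i x) * ((k i)ᴴ * k i) * (φ i y * (k i)ᴴ) := by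
              rw [h]; noncomm_ring
          _ = k i * φ i x * (k i)ᴴ * (k i * φ i y * (k i)ᴴ) := by noncomm_ring
      map_zero' := by simp
      map_add' := fun x y => by simp [mul_add, add_mul]
      commutes' := fun c => by
        simp only [Algebra.algebraMap_eq_smul_one, _root_.map_smul, _root_.map_one,
          mul_smul_comm, smul_mul_assoc, mul_one, (hk i).1]
      map_star' := fun x => by
        simp only [map_star, star_eq_conjTranspose, conjTranspose_mul,
          conjTranspose_conjTranspose, mul_assoc] }, fun i x => rfl, ?_, ?_⟩
  · intro i hφ x y hxy
    apply hφ
    replace hxy : k i * (φ i) x * (k i)ᴴ = k i * (φ i) y * (k i)ᴴ := hxy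
    have h := (hk i).2
    have : (k i)ᴴ * (k i * (φ i x) * (k i)ᴴ) * k i
        = (k i)ᴴ * (k i * (φ i y) * (k i)ᴴ) * k i := by rw [hxy]
    calc φ i x = ((k i)ᴴ * k i) * φ i x * ((k i)ᴴ * k i) := by rw [h]; noncomm_ring
      _ = (k i)ᴴ * (k i * (φ i x) * (k i)ᴴ) * k i := by noncomm_ring
      _ = (k i)ᴴ * (k i * (φ i y) * (k i)ᴴ) * k i := this
      _ = ((k i)ᴴ * k i) * φ i y * ((k i)ᴴ * k i) := by noncomm_ring
      _ = φ i y := by rw [h]; noncomm_ring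
  · intro i j x y
    -- decompose into selfadjoint parts
    have key : ∀ (m : I) (z : A m), ∃ X Y : Matrix (Fin d) (Fin d) ℂ,
        X ∈ Submodule.span ℝ 𝔥 ∧ Y ∈ Submodule.span ℝ 𝔥 ∧
        k m * (φ m z) * (k m)ᴴ = X + Complex.I • Y := by
      intro m z
      set re : A m := ((1:ℂ)/2) • (z + star z) with hre
      set im : A m := (Complex.I/2) • (star z - z) with him
      have hre_sa : IsSelfAdjoint ((re : Matrix (Fin (D m)) (Fin (D m)) ℂ)) := by
        simp only [hre, AddSubgroupClass.coe_sub, SetLike.val_smul, AddMemClass.coe_add]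
        unfold _root_.IsSelfAdjoint
        push_cast
        simp [star_smul, star_add, add_comm, Complex.ext_iff]
      have him_sa : IsSelfAdjoint ((im : Matrix (Fin (D m)) (Fin (D m)) ℂ)) := by
        simp only [him]
        unfold _root_.IsSelfAdjoint
        push_cast
        simp only [star_smul, star_sub, StarMemClass.coe_star, star_star]
        rw [show star (Complex.I/2) = -(Complex.I/2) by norm_num [Complex.ext_iff]]
        rw [neg_smul, ← smul_neg, neg_sub]
      have hz : z = re + Complex.I • im := by
        simp only [hre, him, smul_smul, smul_add, smul_sub]
        rw [show Complex.I * (Complex.I/2) = -(1/2 : ℂ) by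
          rw [mul_div_assoc']; rw [Complex.I_mul_I]; ring]
        module
      refine ⟨k m * (φ m re) * (k m)ᴴ, k m * (φ m im) * (k m)ᴴ,
        halign m re hre_sa, halign m im him_sa, ?_⟩
      rw [hz]
      simp only [map_add, _root_.map_smul, mul_add, add_mul, mul_smul_comm, smul_mul_assoc]
    obtain ⟨X1, Y1, hX1, hY1, hz1⟩ := key i x
    obtain ⟨X2, Y2, hX2, hY2, hz2⟩ := key j y
    show (k i * (φ i) x * (k i)ᴴ) * (k j * (φ j) y * (k j)ᴴ)
        = (k j * (φ j) y * (k j)ᴴ) * (k i * (φ i) x * (k i)ᴴ)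
    rw [hz1, hz2]
    have c := span_commute 𝔥 h𝔥
    have c11 := c X1 hX1 X2 hX2
    have c12 := (c X1 hX1 Y2 hY2)
    have c21 := (c Y1 hY1 X2 hX2)
    have c22 := (c Y1 hY1 Y2 hY2)
    have : Commute (X1 + Complex.I • Y1) (X2 + Complex.I • Y2) :=
      ((c11.add_right (c12.smul_right _)).add_left
        (((c21.smul_left _).add_right ((c22.smul_left _).smul_right _))))
    exact this
end
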